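/- For a well-centered triangle (containing its circumcenter), the ratio l*/l of the dual edge length (distance from the circumcenter to the edge midpoint, summed over the two triangles sharing the edge) to the primal edge length equals (cot α + cot β)/2, where α, β are the angles opposite the edge in the two adjacent triangles; in particular the DEC Laplacian weights coincide with the classical cotangent weights. -/

import Mathlib

/-!
Let `O` be the circumcenter of a triangle `ABC` with circumradius `R`, and `M` the midpoint of
`BC`. Apollonius's theorem in the isosceles triangle `OBC` gives `OM² + (BC/2)² = R²`, and the law
of sines gives `BC = 2R sin α` with `α = ∠BAC`, so `OM = R |cos α|` and `OM / BC = |cot α| / 2`.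
The absolute value disappears when `α` is acute.
-/

open EuclideanGeometry Module

variable {V P : Type*} [NormedAddCommGroup V] [InnerProductSpace ℝ V] [MetricSpace P]
  [NormedAddTorsor V P]

namespace EuclideanGeometry.Sphere

variable {s : Sphere P} {p₁ p₂ p₃ : P}

theorem dist_center_midpoint_sq_add_half_dist_sq (hp₁ : p₁ ∈ s) (hp₃ : p₃ ∈ s) :
    dist s.center (midpoint ℝ p₁ p₃) ^ 2 + (dist p₁ p₃ / 2) ^ 2 = s.radius ^ 2 := by
  have h := dist_sq_add_dist_sq_eq_two_mul_dist_midpoint_sq_add_half_dist_sq s.center p₁ p₃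
  rw [dist_comm, mem_sphere.1 hp₁, dist_comm, mem_sphere.1 hp₃] at h
  linarith

variable [Fact (finrank ℝ V = 2)]

theorem dist_eq_two_mul_radius_mul_sin_angle (hp₁ : p₁ ∈ s) (hp₂ : p₂ ∈ s) (hp₃ : p₃ ∈ s)
    (h₂₁ : p₂ ≠ p₁) (h₂₃ : p₂ ≠ p₃) :
    dist p₁ p₃ = 2 * s.radius * Real.sin (∠ p₁ p₂ p₃) := by
  by_cases h₁₃ : p₁ = p₃
  · simp [h₁₃, angle_self_of_ne h₂₃.symm]
  have : FiniteDimensional ℝ V := .of_fact_finrank_eq_two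
  have : Module.Oriented ℝ V (Fin 2) := ⟨Basis.orientation (finBasisOfFinrankEq _ _ Fact.out)⟩
  have hsin : |Real.Angle.sin (∡ p₁ p₂ p₃)| = Real.sin (∠ p₁ p₂ p₃) := by
    rw [← Real.Angle.sin_toReal, Real.abs_sin_eq_sin_abs_of_abs_le_pi
      (Real.Angle.abs_toReal_le_pi _), ← angle_eq_abs_oangle_toReal h₂₁.symm h₂₃.symm]
  have hlaw := dist_div_sin_oangle_eq_two_mul_radius hp₁ hp₂ hp₃ h₂₁.symm h₁₃ h₂₃
  rw [hsin] at hlaw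
  -- The sine cannot vanish: otherwise the radius is `0` and `p₁ = s.center = p₃`.
  have hsin_ne : Real.sin (∠ p₁ p₂ p₃) ≠ 0 := by
    intro h0
    rw [h0, div_zero, eq_comm, mul_eq_zero_iff_left two_ne_zero] at hlaw
    rw [mem_sphere, hlaw, dist_eq_zero] at hp₁ hp₃
    exact h₁₃ (hp₁.trans hp₃.symm)
  rw [← hlaw, div_mul_cancel₀ _ hsin_ne]

theorem dist_center_midpoint_eq_radius_mul_abs_cos (hp₁ : p₁ ∈ s) (hp₂ : p₂ ∈ s) (hp₃ : p₃ ∈ s)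
    (h₂₁ : p₂ ≠ p₁) (h₂₃ : p₂ ≠ p₃) :
    dist s.center (midpoint ℝ p₁ p₃) = s.radius * |Real.cos (∠ p₁ p₂ p₃)| := by
  have hapollonius := dist_center_midpoint_sq_add_half_dist_sq hp₁ hp₃
  rw [dist_eq_two_mul_radius_mul_sin_angle hp₁ hp₂ hp₃ h₂₁ h₂₃] at hapollonius
  have hsq : dist s.center (midpoint ℝ p₁ p₃) ^ 2 = (s.radius * |Real.cos (∠ p₁ p₂ p₃)|) ^ 2 := by
    rw [mul_pow, sq_abs]
    linear_combination hapollonius - s.radius ^ 2 * Real.sin_sq_add_cos_sq (∠ p₁ p₂ p₃)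
  exact (sq_eq_sq₀ dist_nonneg (mul_nonneg (radius_nonneg_of_mem hp₁) (abs_nonneg _))).1 hsq

theorem dist_center_midpoint_div_dist_eq_abs_cos_div_sin_div_two (hp₁ : p₁ ∈ s) (hp₂ : p₂ ∈ s)
    (hp₃ : p₃ ∈ s) (h₂₁ : p₂ ≠ p₁) (h₂₃ : p₂ ≠ p₃) :
    dist s.center (midpoint ℝ p₁ p₃) / dist p₁ p₃ =
      |Real.cos (∠ p₁ p₂ p₃)| / Real.sin (∠ p₁ p₂ p₃) / 2 := by
  have hradius : s.radius ≠ 0 := by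
    intro h0
    rw [mem_sphere, h0, dist_eq_zero] at hp₁ hp₂
    exact h₂₁ (hp₂.trans hp₁.symm)
  rw [dist_center_midpoint_eq_radius_mul_abs_cos hp₁ hp₂ hp₃ h₂₁ h₂₃,
    dist_eq_two_mul_radius_mul_sin_angle hp₁ hp₂ hp₃ h₂₁ h₂₃]
  field_simp

end EuclideanGeometry.Sphere

open EuclideanGeometry.Sphere in
theorem dist_circumcenter_midpoint_div_dist_eq_cot_div_two [Fact (finrank ℝ V = 2)]
    {A B C O : P} {R : ℝ} (hO : dist O A = R ∧ dist O B = R ∧ dist O C = R)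
    (hA : ∠ B A C < Real.pi / 2) :
    dist O (midpoint ℝ B C) / dist B C = Real.cos (∠ B A C) / Real.sin (∠ B A C) / 2 := by
  obtain ⟨hOA, hOB, hOC⟩ := hO
  have hBA : B ≠ A := by
    rintro rfl
    exact hA.ne (angle_self_left _ _)
  have hCA : C ≠ A := by
    rintro rfl
    exact hA.ne (angle_self_right _ _)
  have hcos : 0 ≤ Real.cos (∠ B A C) :=
    Real.cos_nonneg_of_neg_pi_div_two_le_of_le (by linarith [angle_nonneg B A C, Real.pi_pos]) hA.le
  rw [← abs_of_nonneg hcos]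
  exact dist_center_midpoint_div_dist_eq_abs_cos_div_sin_div_two (s := ⟨O, R⟩)
    (mem_sphere'.2 hOB) (mem_sphere'.2 hOA) (mem_sphere'.2 hOC) hBA.symm hCA.symm

theorem dec_cotangent_weights_general
    (A B C D O₁ O₂ : EuclideanSpace ℝ (Fin 2))
    (R₁ R₂ : ℝ)
    (hO₁ : dist O₁ A = R₁ ∧ dist O₁ B = R₁ ∧ dist O₁ C = R₁)
    (hO₂ : dist O₂ D = R₂ ∧ dist O₂ B = R₂ ∧ dist O₂ C = R₂)
    (hα : ∠ B A C < Real.pi / 2) (hβ : ∠ B D C < Real.pi / 2) :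
    (dist O₁ (midpoint ℝ B C) + dist O₂ (midpoint ℝ B C)) / dist B C =
      (Real.cos (∠ B A C) / Real.sin (∠ B A C)
        + Real.cos (∠ B D C) / Real.sin (∠ B D C)) / 2 := by
  have : Fact (finrank ℝ (EuclideanSpace ℝ (Fin 2)) = 2) := ⟨finrank_euclideanSpace_fin⟩
  rw [add_div, dist_circumcenter_midpoint_div_dist_eq_cot_div_two hO₁ hα,
    dist_circumcenter_midpoint_div_dist_eq_cot_div_two hO₂ hβ]
  ring

/-- Cotangent weights: for an edge `BC` shared by two well-centered triangles
`ABC` and `DBC` with circumcenters `O₁`, `O₂`, the ratio of the dual edge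
length (sum of distances from each circumcenter to the midpoint of `BC`) to the
primal length `|BC|` equals `(cot α + cot β)/2`, where `α = ∠BAC`, `β = ∠BDC`. -/
theorem dec_cotangent_weights
    (A B C D O₁ O₂ : EuclideanSpace ℝ (Fin 2))
    (hABC : AffineIndependent ℝ ![A, B, C])
    (hDBC : AffineIndependent ℝ ![D, B, C])
    (R₁ R₂ : ℝ)
    (hO₁ : dist O₁ A = R₁ ∧ dist O₁ B = R₁ ∧ dist O₁ C = R₁)
    (hO₂ : dist O₂ D = R₂ ∧ dist O₂ B = R₂ ∧ dist O₂ C = R₂)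
    (hα : ∠ B A C < Real.pi / 2) (hβ : ∠ B D C < Real.pi / 2) :
    (dist O₁ (midpoint ℝ B C) + dist O₂ (midpoint ℝ B C)) / dist B C =
      (Real.cos (∠ B A C) / Real.sin (∠ B A C)
        + Real.cos (∠ B D C) / Real.sin (∠ B D C)) / 2 :=
  dec_cotangent_weights_general A B C D O₁ O₂ R₁ R₂ hO₁ hO₂ hα hβ
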